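/- arXiv:2404.17456 — 2 statements merged into one kernel-verified Lean document; each statement's English description precedes it below -/
import Mathlib

section
/- Let θ > 0, let z ∈ ℝ, let T ≥ 1, and let an integrate-and-fire neuron with threshold θ, constant per-step input z, and initial potential v(0) evolve by u(t) = v(t-1) + z, s(t) = 1 if u(t) ≥ θ else 0, v(t) = u(t) - θ·s(t). If 0 ≤ v(T) < θ, then the average postsynaptic potential satisfies φ(T) = (θ/T)·∑_{t=1}^{T} s(t) = θ·clip((1/T)·⌊(z·T + v(0))/θ⌋, 0, 1), where clip(x,0,1) = min(1, max(0, x)). -/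
/-!
Reset by subtraction removes exactly `θ` per spike, so after `n` steps the potential is
`v 0 + n z - θ N`, where `N` is the number of spikes. If `v T ∈ [0, θ)`, this writes
`z T + v 0 = θ N + v T` as a division with remainder, hence `N = ⌊(z T + v 0) / θ⌋`; since
`0 ≤ N ≤ T`, the clip is inactive.
-/

open Finset

section IntegrateAndFire

variable {θ z : ℝ} {u s v : ℕ → ℝ}

theorem potential_eq_sub_spikes (hu : ∀ t : ℕ, 1 ≤ t → u t = v (t - 1) + z)
    (hv : ∀ t : ℕ, 1 ≤ t → v t = u t - θ * s t) (n : ℕ) :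
    v n = v 0 + n * z - θ * ∑ t ∈ Icc 1 n, s t := by
  induction n with
  | zero => simp
  | succ n ih =>
    rw [sum_Icc_succ_top (Nat.le_add_left 1 n), hv (n + 1) (Nat.le_add_left 1 n),
      hu (n + 1) (Nat.le_add_left 1 n), Nat.add_sub_cancel, ih]
    push_cast
    ring

theorem sum_spikes_eq_card (hs : ∀ t : ℕ, 1 ≤ t → s t = if θ ≤ u t then 1 else 0) (n : ℕ) :
    ∑ t ∈ Icc 1 n, s t = #{t ∈ Icc 1 n | θ ≤ u t} := by
  rw [sum_congr rfl fun t ht => hs t (mem_Icc.mp ht).1, sum_boole]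

end IntegrateAndFire

theorem Int.floor_div_eq_of_eq_mul_add {x θ r : ℝ} {N : ℤ} (hr₀ : 0 ≤ r) (hrθ : r < θ)
    (hx : x = θ * N + r) : ⌊x / θ⌋ = N := by
  have hθ : 0 < θ := hr₀.trans_lt hrθ
  rw [Int.floor_eq_iff, le_div_iff₀ hθ, div_lt_iff₀ hθ]
  constructor <;> linarith

theorem clip_one_div_mul_natCast {N T : ℕ} (hNT : N ≤ T) :
    min 1 (max 0 ((1 / T : ℝ) * N)) = N / T := by
  rw [one_div_mul_eq_div, max_eq_right (by positivity), min_eq_right]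
  exact div_le_one_of_le₀ (Nat.cast_le.mpr hNT) (Nat.cast_nonneg T)

theorem if_neuron_avg_potential_clip_floor_general (θ z : ℝ) (T : ℕ)
    (u s v : ℕ → ℝ)
    (hu : ∀ t : ℕ, 1 ≤ t → u t = v (t - 1) + z)
    (hs : ∀ t : ℕ, 1 ≤ t → s t = if θ ≤ u t then 1 else 0)
    (hv : ∀ t : ℕ, 1 ≤ t → v t = u t - θ * s t)
    (hres : 0 ≤ v T ∧ v T < θ) :
    (θ / (T : ℝ)) * ∑ t ∈ Finset.Icc 1 T, s t =
      θ * min 1 (max 0 ((1 / (T : ℝ)) * ((⌊(z * T + v 0) / θ⌋ : ℤ) : ℝ))) := by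
  set N := #{t ∈ Icc 1 T | θ ≤ u t}
  have hsum : ∑ t ∈ Icc 1 T, s t = N := sum_spikes_eq_card hs T
  have hNT : N ≤ T := (card_filter_le _ _).trans (Nat.card_Icc 1 T).le
  have hfloor : ⌊(z * T + v 0) / θ⌋ = N := by
    refine Int.floor_div_eq_of_eq_mul_add hres.1 hres.2 ?_
    have := potential_eq_sub_spikes hu hv T
    rw [hsum] at this
    push_cast
    linarith
  rw [hsum, hfloor, Int.cast_natCast, clip_one_div_mul_natCast hNT]
  ring

/-- For an IF neuron with reset-by-subtraction, threshold `θ > 0`, constant per-step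
input `z`, if `0 ≤ v T < θ` then the average postsynaptic potential equals
`θ * clip((1/T) * ⌊(z*T + v 0)/θ⌋, 0, 1)`, where `clip(x,0,1) = min 1 (max 0 x)`. -/
theorem if_neuron_avg_potential_clip_floor (θ z : ℝ) (hθ : 0 < θ) (T : ℕ) (hT : 1 ≤ T)
    (u s v : ℕ → ℝ)
    (hu : ∀ t : ℕ, 1 ≤ t → u t = v (t - 1) + z)
    (hs : ∀ t : ℕ, 1 ≤ t → s t = if θ ≤ u t then 1 else 0)
    (hv : ∀ t : ℕ, 1 ≤ t → v t = u t - θ * s t)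
    (hres : 0 ≤ v T ∧ v T < θ) :
    (θ / (T : ℝ)) * ∑ t ∈ Finset.Icc 1 T, s t =
      θ * min 1 (max 0 ((1 / (T : ℝ)) * ((⌊(z * T + v 0) / θ⌋ : ℤ) : ℝ))) :=
  if_neuron_avg_potential_clip_floor_general θ z T u s v hu hs hv hres
end

section
/- Let λ > 0 and let T ≥ 1 and L ≥ 1 be natural numbers. If z is a random variable uniformly distributed on [0, λ], then the expected difference between the clip-floor-shift quantized activations at steps T and L is zero: ∫ (λ·clip((1/T)·⌊z·T/λ + 1/2⌋, 0, 1) - λ·clip((1/L)·⌊z·L/λ + 1/2⌋, 0, 1)) dμ(z) = 0, where μ is the uniform probability measure on [0, λ]. That is, the quantization error caused by a mismatch T ≠ L vanishes in expectation. -/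
/-!
The reflection `z ↦ λ - z` maps `[0, λ]` to itself and, off the countable set where
`z·T/λ + 1/2` is an integer, turns the activation `f_{T,λ}(z)` into `λ - f_{T,λ}(z)`:
rounding commutes with `u ↦ T - u` away from half-integers, and `clip(1 - x) = 1 - clip x`.
Hence `∫₀^λ f_{T,λ} = λ²/2` for every step `T ≥ 1`, and the expected mismatch vanishes.
-/

open MeasureTheory

noncomputable def clipFloorShift (lam : ℝ) (T : ℕ) (z : ℝ) : ℝ :=
  lam * min 1 (max 0 ((1 / (T : ℝ)) * ((⌊z * T / lam + 1 / 2⌋ : ℤ) : ℝ)))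

lemma min_one_max_zero_one_sub (x : ℝ) :
    min 1 (max 0 (1 - x)) = 1 - min 1 (max 0 x) := by
  simp only [min_def, max_def]
  split_ifs <;> linarith

lemma floor_intCast_sub_add_half {x : ℝ} (hx : x + 1 / 2 ∉ Set.range ((↑) : ℤ → ℝ))
    (n : ℤ) :
    ⌊(n : ℝ) - x + 1 / 2⌋ = n - ⌊x + 1 / 2⌋ := by
  have hlt : (⌊x + 1 / 2⌋ : ℝ) < x + 1 / 2 :=
    (Int.floor_le _).lt_of_ne fun h => hx ⟨_, h⟩
  rw [Int.floor_eq_iff]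
  push_cast
  constructor <;> linarith [Int.lt_floor_add_one (x + 1 / 2)]

lemma clipFloorShift_sub_eq {lam : ℝ} (hlam : lam ≠ 0) {T : ℕ} (hT : T ≠ 0) {z : ℝ}
    (hz : z * T / lam + 1 / 2 ∉ Set.range ((↑) : ℤ → ℝ)) :
    clipFloorShift lam T (lam - z) = lam - clipFloorShift lam T z := by
  have hT' : (T : ℝ) ≠ 0 := Nat.cast_ne_zero.mpr hT
  have harg : (lam - z) * T / lam = ((T : ℤ) : ℝ) - z * T / lam := by
    push_cast; field_simp
  have hscale : 1 / (T : ℝ) * (((T : ℤ) - ⌊z * T / lam + 1 / 2⌋ : ℤ) : ℝ)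
      = 1 - 1 / (T : ℝ) * ⌊z * T / lam + 1 / 2⌋ := by
    push_cast; field_simp
  simp only [clipFloorShift]
  rw [harg, floor_intCast_sub_add_half hz, hscale, min_one_max_zero_one_sub]
  ring

lemma ae_add_half_notMem_range_intCast {c : ℝ} (hc : c ≠ 0) :
    ∀ᵐ z : ℝ, z * c + 1 / 2 ∉ Set.range ((↑) : ℤ → ℝ) := by
  have hinj : Function.Injective fun z : ℝ => z * c + 1 / 2 := fun a b h => by
    simpa [hc] using h
  exact ((Set.countable_range _).preimage hinj).ae_notMem volume

lemma clipFloorShift_monotone {lam : ℝ} (hlam : 0 < lam) (T : ℕ) :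
    Monotone (clipFloorShift lam T) := by
  intro a b hab
  unfold clipFloorShift
  gcongr

lemma intervalIntegral_eq_of_comp_sub_eq {f : ℝ → ℝ} {a b c : ℝ}
    (hf : IntervalIntegrable f volume a b) (hsym : ∀ᵐ z, f (a + b - z) = c - f z) :
    ∫ z in a..b, f z = (b - a) * c / 2 := by
  have hrefl : ∫ z in a..b, f (a + b - z) = ∫ z in a..b, f z := by
    rw [intervalIntegral.integral_comp_sub_left]; ring_nf
  have hcompl : ∫ z in a..b, f (a + b - z) = (b - a) * c - ∫ z in a..b, f z := by
    rw [intervalIntegral.integral_congr_ae (hsym.mono fun z hz _ => hz),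
      intervalIntegral.integral_sub intervalIntegrable_const hf, intervalIntegral.integral_const,
      smul_eq_mul]
  linarith

lemma integral_clipFloorShift {lam : ℝ} (hlam : 0 < lam) {T : ℕ} (hT : T ≠ 0) :
    ∫ z in (0 : ℝ)..lam, clipFloorShift lam T z = lam ^ 2 / 2 := by
  have hc : (T : ℝ) / lam ≠ 0 := div_ne_zero (Nat.cast_ne_zero.mpr hT) hlam.ne'
  rw [intervalIntegral_eq_of_comp_sub_eq (c := lam)
    (clipFloorShift_monotone hlam T).intervalIntegrable]
  · ring
  filter_upwards [ae_add_half_notMem_range_intCast hc] with z hz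
  rw [zero_add]
  exact clipFloorShift_sub_eq hlam.ne' hT (by rwa [mul_div_assoc])

/-- For `z` uniform on `[0, λ]`, the expected difference between the clip-floor-shift
quantized activations with steps `T` and `L` is zero. -/
theorem qcfs_step_mismatch_zero_expectation (lam : ℝ) (hlam : 0 < lam)
    (T L : ℕ) (hT : 1 ≤ T) (hL : 1 ≤ L) :
    ∫ z, (lam * min 1 (max 0 ((1 / (T : ℝ)) * ((⌊z * T / lam + 1 / 2⌋ : ℤ) : ℝ)))
        - lam * min 1 (max 0 ((1 / (L : ℝ)) * ((⌊z * L / lam + 1 / 2⌋ : ℤ) : ℝ))))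
      ∂((ENNReal.ofReal lam)⁻¹ • volume.restrict (Set.Icc (0 : ℝ) lam)) = 0 := by
  change ∫ z, (clipFloorShift lam T z - clipFloorShift lam L z) ∂_ = 0
  have hint (S : ℕ) : IntervalIntegrable (clipFloorShift lam S) volume 0 lam :=
    (clipFloorShift_monotone hlam S).intervalIntegrable
  rw [integral_smul_measure, integral_Icc_eq_integral_Ioc,
    ← intervalIntegral.integral_of_le hlam.le,
    intervalIntegral.integral_sub (hint T) (hint L), integral_clipFloorShift hlam (by omega),
    integral_clipFloorShift hlam (by omega), sub_self, smul_zero]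
end
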